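/- A ranked configuration of type (a) has a nonzero vector of periodicity: let S ⊆ Q^{ℤ²} be a closed, shift-invariant set and let x ∈ S be ranked (x ∉ S^{(λ)} for some ordinal λ) such that every pattern that appears in x appears in x at infinitely many translates; then there exists v ∈ ℤ², v ≠ 0, with σ_v(x) = x. -/

import Mathlib

open Set

/-- A configuration assigns a state to each cell of the plane. -/
abbrev Config (Q : Type*) : Type _ := (ℤ × ℤ) → Q

/-- The shift by a vector `v`: `σ_v c = fun x => c (x + v)`. -/
def shiftC {Q : Type*} (v : ℤ × ℤ) (c : Config Q) : Config Q := fun x => c (x + v)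

/-- The pattern `P` with (finite) domain `V` appears in `c` at translate `t`. -/
def AppearsAt {Q : Type*} (c : Config Q) (V : Finset (ℤ × ℤ)) (P : (ℤ × ℤ) → Q)
    (t : ℤ × ℤ) : Prop :=
  ∀ x ∈ V, c (x + t) = P x

/-- The pattern `P` with (finite) domain `V` appears in `c`. -/
def Appears {Q : Type*} (c : Config Q) (V : Finset (ℤ × ℤ)) (P : (ℤ × ℤ) → Q) : Prop :=
  ∃ t : ℤ × ℤ, AppearsAt c V P t

/-- The pattern preorder: `x ≼ y` iff every pattern appearing in `x` appears in `y`. -/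
def PatLe {Q : Type*} (x y : Config Q) : Prop :=
  ∀ (V : Finset (ℤ × ℤ)) (P : (ℤ × ℤ) → Q), Appears x V P → Appears y V P

/-- A set of configurations is shift-invariant. -/
def ShiftInvariant {Q : Type*} (S : Set (Config Q)) : Prop :=
  ∀ c ∈ S, ∀ v : ℤ × ℤ, shiftC v c ∈ S

/-- `c` is an isolated point of `S` (in the subspace topology). -/
def IsolatedIn {Q : Type*} [TopologicalSpace Q] (S : Set (Config Q)) (c : Config Q) : Prop :=
  ∃ U : Set (Config Q), IsOpen U ∧ U ∩ S = {c}

/-- The topological derivative: the non-isolated points of `S`. -/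
def derivSet {Q : Type*} [TopologicalSpace Q] (S : Set (Config Q)) : Set (Config Q) :=
  {c ∈ S | ¬ IsolatedIn S c}

/-- Transfinite iteration of the topological derivative (Cantor–Bendixson). -/
noncomputable def CBIter {Q : Type*} [TopologicalSpace Q] (S : Set (Config Q))
    (o : Ordinal) : Set (Config Q) :=
  Ordinal.limitRecOn o S (fun _ ih => derivSet ih)
    (fun o _ ih => ⋂ (β : {β : Ordinal // β < o}), ih β.1 β.2)

/-- The Cantor–Bendixson rank of `c` in `S`: least `λ` with `c ∉ S^{(λ)}`. -/
noncomputable def CBRank {Q : Type*} [TopologicalSpace Q] (S : Set (Config Q))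
    (c : Config Q) : Ordinal :=
  sInf {l : Ordinal | c ∉ CBIter S l}

/-- A configuration is periodic iff its shift orbit is finite (equivalently, its
stabilizer has finite index in `ℤ²`). -/
def IsPeriodic {Q : Type*} (c : Config Q) : Prop :=
  (Set.range fun v : ℤ × ℤ => shiftC v c).Finite

/-- `c` is a tiling for the tile-set with domain `V` and allowed patterns `A`. -/
def IsTiling {Q : Type*} (V : Finset (ℤ × ℤ)) (A : Set ({x // x ∈ V} → Q))
    (c : Config Q) : Prop :=
  ∀ t : ℤ × ℤ, (fun y : {x // x ∈ V} => c (t + y.1)) ∈ A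

/-- The set of tilings of a tile-set. -/
def Tilings {Q : Type*} (V : Finset (ℤ × ℤ)) (A : Set ({x // x ∈ V} → Q)) :
    Set (Config Q) :=
  {c | IsTiling V A c}

/-!
An isolated point `x` of a set `T` is pinned down inside `T` by its restriction to a finite
window `I`. If `T` is shift-invariant and the pattern `x|I` recurs at some `t ≠ 0`, then
`σ_t x ∈ T` agrees with `x` on `I`, so `σ_t x = x`. A ranked point of `S` is isolated in some
Cantor–Bendixson derivative `S^{(β)}`, which is shift-invariant because shifts are homeomorphisms.
-/

section Shift

variable {Q : Type*}

lemma shiftC_shiftC (v w : ℤ × ℤ) (c : Config Q) :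
    shiftC v (shiftC w c) = shiftC (w + v) c := by
  funext y
  simp only [shiftC, add_assoc, add_comm v w]

lemma shiftC_zero (c : Config Q) : shiftC 0 c = c := by
  funext y
  simp only [shiftC, add_zero]

lemma shiftC_injective (v : ℤ × ℤ) : Function.Injective (shiftC v : Config Q → Config Q) := by
  intro c d h
  have := congrArg (shiftC (-v)) h
  rwa [shiftC_shiftC, shiftC_shiftC, add_neg_cancel, shiftC_zero, shiftC_zero] at this

lemma continuous_shiftC [TopologicalSpace Q] (v : ℤ × ℤ) :
    Continuous (shiftC v : Config Q → Config Q) :=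
  continuous_pi fun y => continuous_apply (y + v)

end Shift

section CantorBendixson

variable {Q : Type*} [TopologicalSpace Q]

lemma CBIter_zero (S : Set (Config Q)) : CBIter S 0 = S :=
  Ordinal.limitRecOn_zero ..

lemma CBIter_add_one (S : Set (Config Q)) (o : Ordinal) :
    CBIter S (o + 1) = derivSet (CBIter S o) :=
  Ordinal.limitRecOn_add_one ..

lemma CBIter_limit (S : Set (Config Q)) {o : Ordinal} (h : Order.IsSuccLimit o) :
    CBIter S o = ⋂ β : {β : Ordinal // β < o}, CBIter S β.1 :=
  Ordinal.limitRecOn_limit _ _ _ _ h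

lemma IsolatedIn.of_shiftC {T : Set (Config Q)} (hT : ShiftInvariant T) {c : Config Q}
    (hc : c ∈ T) (v : ℤ × ℤ) (h : IsolatedIn T (shiftC v c)) : IsolatedIn T c := by
  obtain ⟨U, hU, hUT⟩ := h
  refine ⟨shiftC v ⁻¹' U, hU.preimage (continuous_shiftC v), ?_⟩
  refine eq_singleton_iff_unique_mem.2 ⟨⟨?_, hc⟩, ?_⟩
  · exact (eq_singleton_iff_unique_mem.1 hUT).1.1
  · rintro d ⟨hdU, hdT⟩
    exact shiftC_injective v (hUT.subset ⟨hdU, hT d hdT v⟩)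

lemma ShiftInvariant.derivSet {T : Set (Config Q)} (hT : ShiftInvariant T) :
    ShiftInvariant (derivSet T) := fun c ⟨hc, hniso⟩ v =>
  ⟨hT c hc v, fun hiso => hniso (hiso.of_shiftC hT hc v)⟩

lemma ShiftInvariant.CBIter {S : Set (Config Q)} (hS : ShiftInvariant S) (o : Ordinal) :
    ShiftInvariant (CBIter S o) := by
  induction o using Ordinal.limitRecOn with
  | zero => rwa [CBIter_zero]
  | add_one o ih => rw [CBIter_add_one]; exact ih.derivSet
  | limit o ho ih =>
    rw [CBIter_limit S ho]
    intro c hc v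
    simp only [mem_iInter] at hc ⊢
    exact fun β => ih β.1 β.2 c (hc β) v

lemma exists_isolatedIn_CBIter_of_notMem {S : Set (Config Q)} {x : Config Q} (hx : x ∈ S)
    (o : Ordinal) (ho : x ∉ CBIter S o) :
    ∃ β < o, x ∈ CBIter S β ∧ IsolatedIn (CBIter S β) x := by
  induction o using Ordinal.limitRecOn with
  | zero => exact absurd (by rwa [CBIter_zero]) ho
  | add_one o ih =>
    by_cases hxo : x ∈ CBIter S o
    · rw [CBIter_add_one] at ho
      exact ⟨o, lt_add_one o, hxo, not_not.1 fun hniso => ho ⟨hxo, hniso⟩⟩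
    · obtain ⟨β, hβo, hβ⟩ := ih hxo
      exact ⟨β, hβo.trans (lt_add_one o), hβ⟩
  | limit o hlim ih =>
    rw [CBIter_limit S hlim, mem_iInter, not_forall] at ho
    obtain ⟨⟨γ, hγo⟩, hγ⟩ := ho
    obtain ⟨β, hβγ, hβ⟩ := ih γ hγo hγ
    exact ⟨β, hβγ.trans hγo, hβ⟩

lemma IsolatedIn.exists_finset_eq_of_eqOn {T : Set (Config Q)} {x : Config Q}
    (h : IsolatedIn T x) : ∃ I : Finset (ℤ × ℤ), ∀ c ∈ T, (∀ y ∈ I, c y = x y) → c = x := by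
  obtain ⟨U, hU, hUT⟩ := h
  obtain ⟨I, u, hu, hIU⟩ := isOpen_pi_iff.1 hU x (eq_singleton_iff_unique_mem.1 hUT).1.1
  refine ⟨I, fun c hc hcx => hUT.subset ⟨hIU fun y hy => ?_, hc⟩⟩
  rw [hcx y hy]
  exact (hu y hy).2

end CantorBendixson

lemma IsolatedIn.exists_shiftC_eq_self {Q : Type*} [TopologicalSpace Q] {T : Set (Config Q)}
    (hT : ShiftInvariant T) {x : Config Q} (hx : x ∈ T) (hiso : IsolatedIn T x)
    (hrec : ∀ V : Finset (ℤ × ℤ), ∃ t ≠ 0, AppearsAt x V x t) :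
    ∃ v : ℤ × ℤ, v ≠ 0 ∧ shiftC v x = x := by
  obtain ⟨I, hI⟩ := hiso.exists_finset_eq_of_eqOn
  obtain ⟨t, ht0, ht⟩ := hrec I
  exact ⟨t, ht0, hI _ (hT x hx t) ht⟩

theorem stmt17_general {Q : Type*} [TopologicalSpace Q]
    (S : Set (Config Q)) (hinv : ShiftInvariant S)
    (x : Config Q) (hx : x ∈ S)
    (hranked : ∃ lam : Ordinal, x ∉ CBIter S lam)
    (htypea : ∀ (V : Finset (ℤ × ℤ)) (P : (ℤ × ℤ) → Q),
      Appears x V P → {t : ℤ × ℤ | AppearsAt x V P t}.Infinite) :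
    ∃ v : ℤ × ℤ, v ≠ 0 ∧ shiftC v x = x := by
  obtain ⟨lam, hlam⟩ := hranked
  obtain ⟨β, -, hxβ, hiso⟩ := exists_isolatedIn_CBIter_of_notMem hx lam hlam
  refine hiso.exists_shiftC_eq_self (hinv.CBIter β) hxβ fun V => ?_
  have happ : Appears x V x := ⟨0, fun y _ => by rw [add_zero]⟩
  obtain ⟨t, ht, ht0⟩ := (htypea V x happ).exists_notMem_finite (finite_singleton 0)
  exact ⟨t, ht0, ht⟩

/-- A ranked configuration of type (a) has a nonzero vector of
periodicity. -/
theorem stmt17 {Q : Type*} [Fintype Q] [Nonempty Q] [TopologicalSpace Q] [DiscreteTopology Q]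
    (S : Set (Config Q)) (hcl : IsClosed S) (hinv : ShiftInvariant S)
    (x : Config Q) (hx : x ∈ S)
    (hranked : ∃ lam : Ordinal, x ∉ CBIter S lam)
    (htypea : ∀ (V : Finset (ℤ × ℤ)) (P : (ℤ × ℤ) → Q),
      Appears x V P → {t : ℤ × ℤ | AppearsAt x V P t}.Infinite) :
    ∃ v : ℤ × ℤ, v ≠ 0 ∧ shiftC v x = x :=
  stmt17_general S hinv x hx hranked htypea
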